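/- arXiv:2205.02723 — 2 statements merged into one kernel-verified Lean document; each statement's English description precedes it below -/
import Mathlib

section
/- Let α ∈ (0,2), let w̃^k = (x̃_1^k,…,x̃_p^k,λ̃^k) be the output of the parallel splitting ALM step with input ξ^k, and let ξ^{k+1} = ξ^k − αℳ(ξ^k − ξ̃^k). Then for every w = (x_1,…,x_p,λ) ∈ Ω with ξ = Pw: θ(x) − θ(x̃^k) + (w − w̃^k)ᵀF(w) ≥ (1/(2α))(‖ξ − ξ^{k+1}‖²_ℋ − ‖ξ − ξ^k‖²_ℋ) + ((2 − α)/2)‖ξ^k − ξ̃^k‖²_𝒟. -/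
open Matrix
open scoped Kronecker

noncomputable section

/-- `Q₀ = [β I_p, e_p; −e_pᵀ, 1/β]`. -/
def Q0 (p : ℕ) (β : ℝ) : Matrix (Fin p ⊕ Unit) (Fin p ⊕ Unit) ℝ :=
  Matrix.fromBlocks (β • (1 : Matrix (Fin p) (Fin p) ℝ))
    (Matrix.of fun _ _ => (1 : ℝ))
    (Matrix.of fun _ _ => (-1 : ℝ))
    (Matrix.of fun _ _ => 1 / β)

/-- `D₀ = diag(β, …, β, 1/β)`. -/
def D0 (p : ℕ) (β : ℝ) : Matrix (Fin p ⊕ Unit) (Fin p ⊕ Unit) ℝ :=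
  Matrix.fromBlocks (β • (1 : Matrix (Fin p) (Fin p) ℝ)) 0 0
    (Matrix.of fun _ _ => 1 / β)

/-- `M₀ = I_{p+1} − (1/(p+1))·[e_p e_pᵀ, −(1/β)e_p; β e_pᵀ, p]`. -/
def M0 (p : ℕ) (β : ℝ) : Matrix (Fin p ⊕ Unit) (Fin p ⊕ Unit) ℝ :=
  1 - (1 / (p + 1 : ℝ)) •
    Matrix.fromBlocks (Matrix.of fun _ _ => (1 : ℝ))
      (Matrix.of fun _ _ => -(1 / β))
      (Matrix.of fun _ _ => (β : ℝ))
      (Matrix.of fun _ _ => (p : ℝ))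

/-- `H₀ = [β(I_p + e_p e_pᵀ), 0; 0, (p+1)/β]`. -/
def H0 (p : ℕ) (β : ℝ) : Matrix (Fin p ⊕ Unit) (Fin p ⊕ Unit) ℝ :=
  Matrix.fromBlocks (β • ((1 : Matrix (Fin p) (Fin p) ℝ) + Matrix.of fun _ _ => (1 : ℝ))) 0 0
    (Matrix.of fun _ _ => (p + 1 : ℝ) / β)

/-- `𝒬 = Q₀ ⊗ I_m`. -/
def calQ (p m : ℕ) (β : ℝ) : Matrix ((Fin p ⊕ Unit) × Fin m) ((Fin p ⊕ Unit) × Fin m) ℝ :=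
  Q0 p β ⊗ₖ (1 : Matrix (Fin m) (Fin m) ℝ)

/-- `𝒟 = D₀ ⊗ I_m`. -/
def calD (p m : ℕ) (β : ℝ) : Matrix ((Fin p ⊕ Unit) × Fin m) ((Fin p ⊕ Unit) × Fin m) ℝ :=
  D0 p β ⊗ₖ (1 : Matrix (Fin m) (Fin m) ℝ)

/-- `ℳ = M₀ ⊗ I_m`. -/
def calM (p m : ℕ) (β : ℝ) : Matrix ((Fin p ⊕ Unit) × Fin m) ((Fin p ⊕ Unit) × Fin m) ℝ :=
  M0 p β ⊗ₖ (1 : Matrix (Fin m) (Fin m) ℝ)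

/-- `ℋ = H₀ ⊗ I_m`. -/
def calH (p m : ℕ) (β : ℝ) : Matrix ((Fin p ⊕ Unit) × Fin m) ((Fin p ⊕ Unit) × Fin m) ℝ :=
  H0 p β ⊗ₖ (1 : Matrix (Fin m) (Fin m) ℝ)

/-- `‖v‖²_G = vᵀ G v`. -/
def nsq {p m : ℕ} (G : Matrix ((Fin p ⊕ Unit) × Fin m) ((Fin p ⊕ Unit) × Fin m) ℝ)
    (v : (Fin p ⊕ Unit) × Fin m → ℝ) : ℝ :=
  v ⬝ᵥ G.mulVec v

/-- `θ(x) = Σ_i θ_i(x_i)`. -/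
def thetaSum {p : ℕ} {n : Fin p → ℕ} (θ : (i : Fin p) → (Fin (n i) → ℝ) → ℝ)
    (x : (i : Fin p) → Fin (n i) → ℝ) : ℝ :=
  ∑ i, θ i (x i)

/-- The Euclidean inner product on `ℝ^{n_1}×⋯×ℝ^{n_p}×ℝ^m`. -/
def dotW {p m : ℕ} {n : Fin p → ℕ}
    (w w' : ((i : Fin p) → Fin (n i) → ℝ) × (Fin m → ℝ)) : ℝ :=
  (∑ i, w.1 i ⬝ᵥ w'.1 i) + w.2 ⬝ᵥ w'.2

/-- `F(w) = (−A_1ᵀλ, …, −A_pᵀλ, Σ_i A_i x_i − b)`. -/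
def Fop {p m : ℕ} {n : Fin p → ℕ} (A : (i : Fin p) → Matrix (Fin m) (Fin (n i)) ℝ)
    (b : Fin m → ℝ) (w : ((i : Fin p) → Fin (n i) → ℝ) × (Fin m → ℝ)) :
    ((i : Fin p) → Fin (n i) → ℝ) × (Fin m → ℝ) :=
  (fun i => -((A i)ᵀ.mulVec w.2), (∑ i, (A i).mulVec (w.1 i)) - b)

/-- `Pw = (A_1 x_1, …, A_p x_p, λ) ∈ ℝ^{(p+1)m}`. -/
def Pmap {p m : ℕ} {n : Fin p → ℕ} (A : (i : Fin p) → Matrix (Fin m) (Fin (n i)) ℝ)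
    (w : ((i : Fin p) → Fin (n i) → ℝ) × (Fin m → ℝ)) :
    (Fin p ⊕ Unit) × Fin m → ℝ :=
  fun q => Sum.elim (fun i => (A i).mulVec (w.1 i) q.2) (fun _ => w.2 q.2) q.1

/-- `Ω = 𝒳_1 × ⋯ × 𝒳_p × ℝ^m`. -/
def OmegaSet {p : ℕ} (m : ℕ) {n : Fin p → ℕ} (X : (i : Fin p) → Set (Fin (n i) → ℝ)) :
    Set (((i : Fin p) → Fin (n i) → ℝ) × (Fin m → ℝ)) :=
  {w | ∀ i, w.1 i ∈ X i}

/-- The solution set `Ω*` of the variational inequality VI(Ω,F,θ). -/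
def VIsol {p m : ℕ} {n : Fin p → ℕ} (θ : (i : Fin p) → (Fin (n i) → ℝ) → ℝ)
    (X : (i : Fin p) → Set (Fin (n i) → ℝ))
    (A : (i : Fin p) → Matrix (Fin m) (Fin (n i)) ℝ) (b : Fin m → ℝ) :
    Set (((i : Fin p) → Fin (n i) → ℝ) × (Fin m → ℝ)) :=
  {ws | ws ∈ OmegaSet m X ∧ ∀ w ∈ OmegaSet m X,
    thetaSum θ w.1 - thetaSum θ ws.1 + dotW (w - ws) (Fop A b ws) ≥ 0}

/-- The `λ`-component of `ξ = (u_1, …, u_p, λ)`. -/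
def lamOf {p m : ℕ} (ξ : (Fin p ⊕ Unit) × Fin m → ℝ) : Fin m → ℝ :=
  fun j => ξ (Sum.inr (), j)

/-- The `u_i`-component of `ξ = (u_1, …, u_p, λ)`. -/
def uOf {p m : ℕ} (ξ : (Fin p ⊕ Unit) × Fin m → ℝ) (i : Fin p) : Fin m → ℝ :=
  fun j => ξ (Sum.inl i, j)

/-- The parallel splitting ALM step: with input `ξ = (u_1, …, u_p, λ)` it produces
`w̃ = (x̃_1, …, x̃_p, λ̃)` where each `x̃_i ∈ 𝒳_i` minimizes
`x_i ↦ θ_i(x_i) − λᵀ A_i x_i + (β/2)‖A_i x_i − u_i‖²` over `𝒳_i`, and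
`λ̃ = λ − β(Σ_i u_i − b)`. -/
def ALMStep {p m : ℕ} {n : Fin p → ℕ} (β : ℝ) (θ : (i : Fin p) → (Fin (n i) → ℝ) → ℝ)
    (X : (i : Fin p) → Set (Fin (n i) → ℝ))
    (A : (i : Fin p) → Matrix (Fin m) (Fin (n i)) ℝ) (b : Fin m → ℝ)
    (ξ : (Fin p ⊕ Unit) × Fin m → ℝ)
    (wt : ((i : Fin p) → Fin (n i) → ℝ) × (Fin m → ℝ)) : Prop :=
  (∀ i, wt.1 i ∈ X i ∧ ∀ y ∈ X i,
      θ i (wt.1 i) - lamOf ξ ⬝ᵥ (A i).mulVec (wt.1 i) +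
          β / 2 * (((A i).mulVec (wt.1 i) - uOf ξ i) ⬝ᵥ ((A i).mulVec (wt.1 i) - uOf ξ i)) ≤
        θ i y - lamOf ξ ⬝ᵥ (A i).mulVec y +
          β / 2 * (((A i).mulVec y - uOf ξ i) ⬝ᵥ ((A i).mulVec y - uOf ξ i))) ∧
  wt.2 = lamOf ξ - β • ((∑ i, uOf ξ i) - b)

lemma hHsym (p : ℕ) (β : ℝ) : (H0 p β)ᵀ = H0 p β := by
  ext (i|i) (j|j) <;>
    simp [H0, Matrix.transpose_apply, Matrix.fromBlocks, Matrix.one_apply, eq_comm]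

lemma hQD (p : ℕ) (β : ℝ) : Q0 p β + (Q0 p β)ᵀ = (2:ℝ) • D0 p β := by
  ext (i|i) (j|j) <;>
    simp [Q0, D0, Matrix.fromBlocks, Matrix.one_apply, eq_comm] <;>
    (try split_ifs) <;> (try norm_num) <;> ring

lemma hHM (p : ℕ) (β : ℝ) (hβ : β ≠ 0) : H0 p β * M0 p β = Q0 p β := by
  have hp1 : (p:ℝ) + 1 ≠ 0 := by positivity
  ext (i|i) (j|j) <;>
    simp [H0, M0, Q0, Matrix.mul_apply, Fintype.sum_sum_type, Matrix.fromBlocks,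
      Matrix.one_apply, mul_sub, mul_add, sub_mul, add_mul, Finset.sum_sub_distrib,
      Finset.sum_add_distrib, Finset.mul_sum, Finset.sum_ite_eq, Finset.sum_ite_eq',
      Finset.card_univ, mul_ite, ite_mul] <;>
    (try split_ifs) <;> (try field_simp) <;> (try ring)

lemma hMQ (p : ℕ) (β : ℝ) (hβ : β ≠ 0) : (M0 p β)ᵀ * Q0 p β = D0 p β := by
  have hp1 : (p:ℝ) + 1 ≠ 0 := by positivity
  ext (i|i) (j|j) <;>
    simp [M0, Q0, D0, Matrix.mul_apply, Fintype.sum_sum_type, Matrix.fromBlocks,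
      Matrix.transpose_apply, Matrix.one_apply, mul_sub, mul_add, sub_mul, add_mul,
      Finset.sum_sub_distrib, Finset.sum_add_distrib, Finset.mul_sum, Finset.sum_ite_eq,
      Finset.sum_ite_eq', Finset.card_univ, mul_ite, ite_mul] <;>
    (try split_ifs) <;> (try field_simp) <;> (try ring)

lemma calH_sym (p m : ℕ) (β : ℝ) : (calH p m β)ᵀ = calH p m β := by
  have : (calH p m β)ᵀ = (H0 p β)ᵀ ⊗ₖ (1 : Matrix (Fin m) (Fin m) ℝ)ᵀ := rfl
  rw [this, hHsym, Matrix.transpose_one]; rfl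

lemma calHM (p m : ℕ) (β : ℝ) (hβ : β ≠ 0) : calH p m β * calM p m β = calQ p m β := by
  rw [calH, calM, calQ, ← Matrix.mul_kronecker_mul, hHM p β hβ, Matrix.one_mul]

lemma calMQ (p m : ℕ) (β : ℝ) (hβ : β ≠ 0) :
    (calM p m β)ᵀ * calQ p m β = calD p m β := by
  have h : (calM p m β)ᵀ = (M0 p β)ᵀ ⊗ₖ (1 : Matrix (Fin m) (Fin m) ℝ)ᵀ := rfl
  rw [h, Matrix.transpose_one, calQ, calD, ← Matrix.mul_kronecker_mul, hMQ p β hβ,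
    Matrix.one_mul]

lemma calQD (p m : ℕ) (β : ℝ) : calQ p m β + (calQ p m β)ᵀ = (2:ℝ) • calD p m β := by
  have h : (calQ p m β)ᵀ = (Q0 p β)ᵀ ⊗ₖ (1 : Matrix (Fin m) (Fin m) ℝ)ᵀ := rfl
  rw [h, Matrix.transpose_one, calQ, ← Matrix.add_kronecker, hQD, calD,
    Matrix.smul_kronecker]

set_option maxRecDepth 4000 in
lemma kron_mulVec {p m : ℕ} (B : Matrix (Fin p ⊕ Unit) (Fin p ⊕ Unit) ℝ)
    (v : (Fin p ⊕ Unit) × Fin m → ℝ) (q : Fin p ⊕ Unit) (j : Fin m) :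
    (B ⊗ₖ (1 : Matrix (Fin m) (Fin m) ℝ)).mulVec v (q, j) = ∑ r, B q r * v (r, j) := by
  simp only [Matrix.mulVec, dotProduct, Fintype.sum_prod_type, Matrix.kroneckerMap_apply]
  refine Finset.sum_congr rfl fun r _ => ?_
  rw [Finset.sum_eq_single j]
  · simp
  · intro b _ hb; simp [Matrix.one_apply, Ne.symm hb]
  · simp

lemma dot_decomp {p m : ℕ} (v w : (Fin p ⊕ Unit) × Fin m → ℝ) :
    v ⬝ᵥ w = (∑ i : Fin p, (uOf v i ⬝ᵥ uOf w i)) + lamOf v ⬝ᵥ lamOf w := by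
  simp only [dotProduct, uOf, lamOf, Fintype.sum_prod_type, Fintype.sum_sum_type,
    Finset.univ_unique, Finset.sum_singleton, PUnit.default_eq_unit]


lemma mulVec_dot {p m : ℕ} (M : Matrix ((Fin p ⊕ Unit) × Fin m) ((Fin p ⊕ Unit) × Fin m) ℝ)
    (v w : (Fin p ⊕ Unit) × Fin m → ℝ) :
    M.mulVec v ⬝ᵥ w = v ⬝ᵥ Mᵀ.mulVec w := by
  rw [Matrix.dotProduct_mulVec, Matrix.vecMul_transpose, dotProduct_comm]

lemma rhs_eq {p m : ℕ} {β α : ℝ} (hβ : β ≠ 0) (hα : α ≠ 0)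
    (ξ ξk ξt : (Fin p ⊕ Unit) × Fin m → ℝ) :
    1/(2*α) * (nsq (calH p m β) (ξ - (ξk - α • (calM p m β).mulVec (ξk - ξt)))
        - nsq (calH p m β) (ξ - ξk))
      + (2-α)/2 * nsq (calD p m β) (ξk - ξt)
    = (ξ - ξt) ⬝ᵥ (calQ p m β).mulVec (ξk - ξt) := by
  set g := ξk - ξt with hg
  set y := (calM p m β).mulVec g with hy
  have hsplit : ξ - (ξk - α • y) = (ξ - ξk) + α • y := by
    funext q; simp [Pi.sub_apply, Pi.add_apply, Pi.smul_apply]; ring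
  have hHy : (calH p m β).mulVec y = (calQ p m β).mulVec g := by
    rw [hy, Matrix.mulVec_mulVec, calHM p m β hβ]
  have hyHx : ∀ x, y ⬝ᵥ (calH p m β).mulVec x = x ⬝ᵥ (calQ p m β).mulVec g := by
    intro x
    rw [Matrix.dotProduct_mulVec,
      show calH p m β = (calH p m β)ᵀ from (calH_sym p m β).symm,
      Matrix.vecMul_transpose, hHy, dotProduct_comm]
  have hyQg : y ⬝ᵥ (calQ p m β).mulVec g = g ⬝ᵥ (calD p m β).mulVec g := by
    rw [hy, mulVec_dot, Matrix.mulVec_mulVec, calMQ p m β hβ]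
  have hQg : g ⬝ᵥ (calQ p m β).mulVec g = g ⬝ᵥ (calD p m β).mulVec g := by
    have h2 : g ⬝ᵥ ((calQ p m β + (calQ p m β)ᵀ).mulVec g)
        = g ⬝ᵥ (((2:ℝ) • calD p m β).mulVec g) := by rw [calQD]
    rw [Matrix.add_mulVec, dotProduct_add] at h2
    have h3 : g ⬝ᵥ ((calQ p m β)ᵀ.mulVec g) = g ⬝ᵥ (calQ p m β).mulVec g := by
      rw [← mulVec_dot, dotProduct_comm]
    rw [h3] at h2
    have h4 : g ⬝ᵥ (((2:ℝ) • calD p m β).mulVec g) = 2 * (g ⬝ᵥ (calD p m β).mulVec g) := by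
      rw [Matrix.smul_mulVec, dotProduct_smul]; simp
    rw [h4] at h2; linarith
  have hexp : nsq (calH p m β) ((ξ - ξk) + α • y)
      = nsq (calH p m β) (ξ - ξk) + 2*α*((ξ - ξk) ⬝ᵥ (calQ p m β).mulVec g)
        + α^2 * (g ⬝ᵥ (calD p m β).mulVec g) := by
    rw [nsq, Matrix.mulVec_add, Matrix.mulVec_smul, dotProduct_add,
      add_dotProduct, add_dotProduct, dotProduct_smul,
      smul_dotProduct, smul_dotProduct, dotProduct_smul,
      hyHx, hHy, hyQg]
    have : (ξ - ξk) ⬝ᵥ (calH p m β).mulVec (ξ - ξk) = nsq (calH p m β) (ξ - ξk) := rfl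
    rw [this]
    have h5 : (ξ - ξk) ⬝ᵥ (calQ p m β).mulVec g = (ξ - ξk) ⬝ᵥ (calQ p m β).mulVec g := rfl
    simp only [smul_eq_mul]; ring
  have hxQg : (ξ - ξk) ⬝ᵥ (calQ p m β).mulVec g
      = (ξ - ξt) ⬝ᵥ (calQ p m β).mulVec g - g ⬝ᵥ (calD p m β).mulVec g := by
    have : ξ - ξk = (ξ - ξt) - g := by funext q; simp [hg]
    rw [this, sub_dotProduct, hQg]
  rw [hsplit, hexp, hxQg]
  have hD : nsq (calD p m β) g = g ⬝ᵥ (calD p m β).mulVec g := rfl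
  rw [hD]
  field_simp
  ring

lemma dot_self_nonneg {m : ℕ} (v : Fin m → ℝ) : 0 ≤ v ⬝ᵥ v :=
  Finset.sum_nonneg fun i _ => mul_self_nonneg _

lemma dot_sum {ι : Type*} {m : ℕ} (s : Finset ι) (v : Fin m → ℝ) (w : ι → Fin m → ℝ) :
    v ⬝ᵥ (∑ i ∈ s, w i) = ∑ i ∈ s, v ⬝ᵥ w i := by
  simp only [dotProduct, Finset.sum_apply, Finset.mul_sum]
  rw [Finset.sum_comm]

lemma key_scalar {c K : ℝ} (hK : 0 ≤ K)
    (h : ∀ t : ℝ, 0 < t → t ≤ 1 → 0 ≤ t * c + t ^ 2 * K) : 0 ≤ c := by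
  rcases eq_or_lt_of_le hK with hK0 | hKpos
  · have h1 := h 1 one_pos le_rfl
    nlinarith
  · by_contra hc
    push_neg at hc
    have htpos : 0 < min 1 (-c / (2 * K)) := by
      apply lt_min one_pos
      apply div_pos (by linarith) (by linarith)
    have ht1 : min 1 (-c / (2 * K)) ≤ 1 := min_le_left _ _
    have ht2 : min 1 (-c / (2 * K)) ≤ -c / (2 * K) := min_le_right _ _
    have h2 := h _ htpos ht1
    set t := min 1 (-c / (2 * K)) with ht
    have h3 : t * K ≤ -c / 2 := by
      rw [le_div_iff₀ (by linarith : (0:ℝ) < 2 * K)] at ht2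
      nlinarith
    nlinarith [mul_pos htpos htpos, mul_pos htpos hKpos]

lemma block_VI {n' m : ℕ} (θi : (Fin n' → ℝ) → ℝ) (hθ : ConvexOn ℝ Set.univ θi)
    (Xi : Set (Fin n' → ℝ)) (hX : Convex ℝ Xi)
    (Ai : Matrix (Fin m) (Fin n') ℝ) (lk ui : Fin m → ℝ) {β : ℝ} (hβ : 0 < β)
    (xt : Fin n' → ℝ)
    (hopt : ∀ y ∈ Xi,
      θi xt - lk ⬝ᵥ Ai.mulVec xt + β / 2 * ((Ai.mulVec xt - ui) ⬝ᵥ (Ai.mulVec xt - ui)) ≤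
      θi y - lk ⬝ᵥ Ai.mulVec y + β / 2 * ((Ai.mulVec y - ui) ⬝ᵥ (Ai.mulVec y - ui)))
    (hxt : xt ∈ Xi) :
    ∀ y ∈ Xi, 0 ≤ θi y - θi xt +
      (Ai.mulVec y - Ai.mulVec xt) ⬝ᵥ (β • (Ai.mulVec xt - ui) - lk) := by
  intro y hy
  set d : Fin m → ℝ := Ai.mulVec y - Ai.mulVec xt with hd
  set v : Fin m → ℝ := Ai.mulVec xt - ui with hv
  apply key_scalar (K := β / 2 * (d ⬝ᵥ d))
  · have := dot_self_nonneg d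
    positivity
  intro t ht0 ht1
  have hz : xt + t • (y - xt) ∈ Xi := by
    have h := hX hxt hy (by linarith : (0:ℝ) ≤ 1 - t) (le_of_lt ht0) (by ring)
    have : (1 - t) • xt + t • y = xt + t • (y - xt) := by
      funext j; simp [Pi.smul_apply, smul_eq_mul]; ring
    rwa [this] at h
  have hθz : θi (xt + t • (y - xt)) ≤ (1 - t) * θi xt + t * θi y := by
    have h := hθ.2 (Set.mem_univ xt) (Set.mem_univ y)
      (by linarith : (0:ℝ) ≤ 1 - t) (le_of_lt ht0) (by ring)
    have he : (1 - t) • xt + t • y = xt + t • (y - xt) := by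
      funext j; simp [Pi.smul_apply, smul_eq_mul]; ring
    rw [he] at h
    simpa [smul_eq_mul] using h
  have hAz : Ai.mulVec (xt + t • (y - xt)) = Ai.mulVec xt + t • d := by
    rw [Matrix.mulVec_add, Matrix.mulVec_smul, hd, Matrix.mulVec_sub]
  have hopt2 := hopt _ hz
  rw [hAz] at hopt2
  have hlin : lk ⬝ᵥ (Ai.mulVec xt + t • d) = lk ⬝ᵥ Ai.mulVec xt + t * (lk ⬝ᵥ d) := by
    rw [dotProduct_add, dotProduct_smul]; simp
  have hvd : Ai.mulVec xt + t • d - ui = v + t • d := by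
    funext j; simp [hv]; ring
  have hquad : (Ai.mulVec xt + t • d - ui) ⬝ᵥ (Ai.mulVec xt + t • d - ui)
      = v ⬝ᵥ v + 2 * t * (v ⬝ᵥ d) + t ^ 2 * (d ⬝ᵥ d) := by
    rw [hvd, dotProduct_add, add_dotProduct, add_dotProduct,
      dotProduct_smul, smul_dotProduct, smul_dotProduct,
      dotProduct_smul, dotProduct_comm d v]
    simp [smul_eq_mul]; ring
  rw [hlin, hquad] at hopt2
  have hgoal : d ⬝ᵥ (β • v - lk) = β * (v ⬝ᵥ d) - d ⬝ᵥ lk := by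
    rw [dotProduct_sub, dotProduct_smul, dotProduct_comm d v]
    simp [smul_eq_mul]
  rw [hgoal]
  have hdl : d ⬝ᵥ lk = lk ⬝ᵥ d := dotProduct_comm _ _
  nlinarith [hopt2, hθz]

lemma calQ_u {p m : ℕ} (β : ℝ) (v : (Fin p ⊕ Unit) × Fin m → ℝ) (i : Fin p) :
    uOf ((calQ p m β).mulVec v) i = β • uOf v i + lamOf v := by
  funext j
  show (calQ p m β).mulVec v (Sum.inl i, j) = _
  rw [calQ, kron_mulVec]
  simp [Q0, Fintype.sum_sum_type, Matrix.fromBlocks, Matrix.one_apply, Matrix.smul_apply,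
    ite_mul, mul_ite, zero_mul, mul_zero, uOf, lamOf, Finset.sum_ite_eq,
    Finset.sum_ite_eq', smul_eq_mul]

lemma calQ_lam {p m : ℕ} (β : ℝ) (v : (Fin p ⊕ Unit) × Fin m → ℝ) :
    lamOf ((calQ p m β).mulVec v) = -(∑ k, uOf v k) + (1/β) • lamOf v := by
  funext j
  show (calQ p m β).mulVec v (Sum.inr (), j) = _
  rw [calQ, kron_mulVec]
  simp [Q0, Fintype.sum_sum_type, Matrix.fromBlocks, uOf, lamOf, smul_eq_mul,
    Finset.sum_apply]

/-- Key inequality: if `w̃^k` is the output of the parallel splitting ALM step with input `ξ^k`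
and `ξ^{k+1} = ξ^k − αℳ(ξ^k − ξ̃^k)` with `α ∈ (0,2)`, then for every `w ∈ Ω` (with `ξ = Pw`):
`θ(x) − θ(x̃^k) + (w − w̃^k)ᵀF(w) ≥ (1/(2α))(‖ξ − ξ^{k+1}‖²_ℋ − ‖ξ − ξ^k‖²_ℋ)
+ ((2 − α)/2)‖ξ^k − ξ̃^k‖²_𝒟`. -/
theorem stmt10 {p m : ℕ} {n : Fin p → ℕ} (hp : 1 ≤ p)
    (θ : (i : Fin p) → (Fin (n i) → ℝ) → ℝ) (hθ : ∀ i, ConvexOn ℝ Set.univ (θ i))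
    (X : (i : Fin p) → Set (Fin (n i) → ℝ))
    (hXconv : ∀ i, Convex ℝ (X i)) (hXclosed : ∀ i, IsClosed (X i))
    (hXne : ∀ i, (X i).Nonempty)
    (A : (i : Fin p) → Matrix (Fin m) (Fin (n i)) ℝ) (b : Fin m → ℝ)
    {β : ℝ} (hβ : 0 < β) {α : ℝ} (hα : α ∈ Set.Ioo (0 : ℝ) 2)
    (ξk ξk1 : (Fin p ⊕ Unit) × Fin m → ℝ)
    (wt : ((i : Fin p) → Fin (n i) → ℝ) × (Fin m → ℝ))
    (hstep : ALMStep β θ X A b ξk wt)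
    (hrel : ξk1 = ξk - α • (calM p m β).mulVec (ξk - Pmap A wt)) :
    ∀ w ∈ OmegaSet m X,
      thetaSum θ w.1 - thetaSum θ wt.1 + dotW (w - wt) (Fop A b w) ≥
        1 / (2 * α) *
            (nsq (calH p m β) (Pmap A w - ξk1) - nsq (calH p m β) (Pmap A w - ξk)) +
          (2 - α) / 2 * nsq (calD p m β) (ξk - Pmap A wt) := by

  intro w hw
  obtain ⟨hopt, hlt⟩ := hstep
  have hβ0 : β ≠ 0 := ne_of_gt hβ
  have hα0 : α ≠ 0 := ne_of_gt hα.1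
  rw [hrel, rhs_eq hβ0 hα0 (Pmap A w) ξk (Pmap A wt)]
  -- notation
  set Axv : Fin p → Fin m → ℝ := fun i => (A i).mulVec (w.1 i) with hAxv
  set ut : Fin p → Fin m → ℝ := fun i => (A i).mulVec (wt.1 i) with hut
  set ui : Fin p → Fin m → ℝ := fun i => uOf ξk i with hui
  set lk : Fin m → ℝ := lamOf ξk with hlk
  set l : Fin m → ℝ := w.2 with hl
  set lt : Fin m → ℝ := wt.2 with hltv
  set d : Fin p → Fin m → ℝ := fun i => Axv i - ut i with hdd
  -- component facts about ξ - ξt and ξk - ξt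
  have hu1 : ∀ i, uOf (Pmap A w - Pmap A wt) i = d i := fun i => rfl
  have hu2 : ∀ i, uOf (ξk - Pmap A wt) i = ui i - ut i := fun i => rfl
  have hl1 : lamOf (Pmap A w - Pmap A wt) = l - lt := rfl
  have hl2 : lamOf (ξk - Pmap A wt) = lk - lt := rfl
  have hgl : lk - lt = β • ((∑ i, ui i) - b) := by
    rw [hlt]; abel
  -- compute T
  have hT : (Pmap A w - Pmap A wt) ⬝ᵥ (calQ p m β).mulVec (ξk - Pmap A wt)
      = (∑ i, d i ⬝ᵥ (β • (ui i - ut i) + (lk - lt)))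
        + (l - lt) ⬝ᵥ ((∑ i, ut i) - b) := by
    rw [dot_decomp]
    congr 1
    · refine Finset.sum_congr rfl fun i _ => ?_
      rw [hu1 i, calQ_u, hu2 i, hl2]
    · rw [hl1, calQ_lam, hl2, hgl]
      congr 1
      funext j
      simp [hu2, Finset.sum_apply, Finset.sum_sub_distrib, smul_eq_mul, hβ0]
      try ring
  rw [hT]
  -- compute LHS inner product
  have hL : dotW (w - wt) (Fop A b w)
      = (∑ i, d i ⬝ᵥ (-l)) + (l - lt) ⬝ᵥ ((∑ i, Axv i) - b) := by
    rw [dotW, Fop]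
    congr 1
    · refine Finset.sum_congr rfl fun i _ => ?_
      show (w.1 i - wt.1 i) ⬝ᵥ (-((A i)ᵀ.mulVec w.2)) = _
      rw [dotProduct_neg, Matrix.dotProduct_mulVec, Matrix.vecMul_transpose,
        Matrix.mulVec_sub, dotProduct_neg]
      try rfl
  rw [hL]
  -- block inequalities
  have hblock : ∀ i, 0 ≤ θ i (w.1 i) - θ i (wt.1 i)
      + d i ⬝ᵥ (β • (ut i - ui i) - lk) := by
    intro i
    exact block_VI (θ i) (hθ i) (X i) (hXconv i) (A i) lk (ui i) hβ (wt.1 i)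
      (fun y hy => (hopt i).2 y hy) ((hopt i).1) (w.1 i) (hw i)
  have hsumpos : 0 ≤ ∑ i, (θ i (w.1 i) - θ i (wt.1 i)
      + d i ⬝ᵥ (β • (ut i - ui i) - lk)) :=
    Finset.sum_nonneg fun i _ => hblock i
  have hsplit2 : ∑ i, (θ i (w.1 i) - θ i (wt.1 i) + d i ⬝ᵥ (β • (ut i - ui i) - lk))
      = (∑ i, (θ i (w.1 i) - θ i (wt.1 i))) + ∑ i, d i ⬝ᵥ (β • (ut i - ui i) - lk) :=
    Finset.sum_add_distrib
  have hθsplit : thetaSum θ w.1 - thetaSum θ wt.1 = ∑ i, (θ i (w.1 i) - θ i (wt.1 i)) := by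
    rw [thetaSum, thetaSum, ← Finset.sum_sub_distrib]
  -- the algebraic identity
  have h1 : ∀ i, d i ⬝ᵥ (-l) - d i ⬝ᵥ (β • (ui i - ut i) + (lk - lt))
      - d i ⬝ᵥ (β • (ut i - ui i) - lk) = d i ⬝ᵥ (lt - l) := by
    intro i
    rw [← dotProduct_sub, ← dotProduct_sub]
    congr 1
    funext j; simp [smul_eq_mul]; ring
  have hA : (∑ i, d i ⬝ᵥ (-l)) - (∑ i, d i ⬝ᵥ (β • (ui i - ut i) + (lk - lt)))
      - (∑ i, d i ⬝ᵥ (β • (ut i - ui i) - lk)) = ∑ i, d i ⬝ᵥ (lt - l) := by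
    rw [← Finset.sum_sub_distrib, ← Finset.sum_sub_distrib]
    exact Finset.sum_congr rfl fun i _ => h1 i
  have h2 : (l - lt) ⬝ᵥ ((∑ i, Axv i) - b) - (l - lt) ⬝ᵥ ((∑ i, ut i) - b)
      = ∑ i, (l - lt) ⬝ᵥ d i := by
    rw [← dotProduct_sub, ← dot_sum]
    congr 1
    funext j; simp [hdd, Finset.sum_apply, Finset.sum_sub_distrib]
  have hB : ∑ i, d i ⬝ᵥ (lt - l) = -∑ i, (l - lt) ⬝ᵥ d i := by
    rw [← Finset.sum_neg_distrib]
    refine Finset.sum_congr rfl fun i _ => ?_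
    rw [show lt - l = -(l - lt) from (neg_sub l lt).symm, dotProduct_neg,
      dotProduct_comm]
  rw [ge_iff_le]
  linarith [hsumpos, hsplit2, hθsplit, hA, h2, hB]
end
end

section
/- Suppose Ω* is nonempty, each A_i has full column rank (i.e., A_i is injective), and α ∈ (0,2). Let the sequence {ξ^k} ⊂ ℝ^{(p+1)m} be generated by iterating, from an arbitrary ξ^0: the parallel splitting ALM step with input ξ^k producing w̃^k and ξ̃^k, followed by the rank-two relaxation step ξ^{k+1} = ξ^k − αℳ(ξ^k − ξ̃^k). Then the sequence {ξ^k} converges to some point ξ^∞ ∈ Ξ*. -/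
open Matrix
open scoped Kronecker

noncomputable section

/-
With `ℋ = H₀ ⊗ I_m`, `𝒬 = Q₀ ⊗ I_m` and `𝒟 = D₀ ⊗ I_m`, the block identities `ℋℳ = 𝒬`,
`ℳᵀ𝒬 = 𝒟` and `𝒬 + 𝒬ᵀ = 2𝒟` drive the argument. The optimality conditions of the subproblems
and the skew-symmetry of `F` give `‖ξ - ξ̃‖²_𝒟 ≤ (ξ - ξ*)ᵀ𝒬(ξ - ξ̃)` for every `ξ* ∈ Ξ*`; expanding
the relaxation step then yields
`‖ξᵏ⁺¹ - ξ*‖²_ℋ ≤ ‖ξᵏ - ξ*‖²_ℋ - α(2 - α)‖ξᵏ - ξ̃ᵏ‖²_𝒟`.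
So `(ξᵏ)` is Fejér monotone with respect to `Ξ*` in the `ℋ`-norm and `ξᵏ - ξ̃ᵏ → 0`. Passing to the
limit in the optimality inequality shows that every cluster point lies in `Ξ*` (injectivity of
the `A_i` recovers the `x`-part of the limit), and Fejér monotonicity turns subsequential
convergence into convergence of the whole sequence.
-/

open Filter Topology

section QuadraticForm

variable {ι : Type*} [Fintype ι]

lemma dotProduct_mulVec_comm_of_transpose_eq {G : Matrix ι ι ℝ} (hG : Gᵀ = G) (a b : ι → ℝ) :
    a ⬝ᵥ G *ᵥ b = b ⬝ᵥ G *ᵥ a := by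
  rw [dotProduct_mulVec, ← mulVec_transpose, hG, dotProduct_comm]

lemma dotProduct_mulVec_self_eq_of_add_transpose {Q D : Matrix ι ι ℝ} (h : Q + Qᵀ = D + D)
    (v : ι → ℝ) : v ⬝ᵥ Q *ᵥ v = v ⬝ᵥ D *ᵥ v := by
  have hv := congrArg (fun G => v ⬝ᵥ G *ᵥ v) h
  have hT : v ⬝ᵥ Qᵀ *ᵥ v = v ⬝ᵥ Q *ᵥ v := by
    rw [mulVec_transpose, dotProduct_comm, ← dotProduct_mulVec]
  simp only [add_mulVec, dotProduct_add, hT] at hv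
  linarith

lemma dotProduct_mulVec_sub_smul_mulVec {H M Q D : Matrix ι ι ℝ} (hH : Hᵀ = H)
    (hHM : H * M = Q) (hMQ : Mᵀ * Q = D) (x d : ι → ℝ) (α : ℝ) :
    (x - α • M *ᵥ d) ⬝ᵥ H *ᵥ (x - α • M *ᵥ d)
      = x ⬝ᵥ H *ᵥ x - 2 * α * (x ⬝ᵥ Q *ᵥ d) + α ^ 2 * (d ⬝ᵥ D *ᵥ d) := by
  have hHMd : H *ᵥ M *ᵥ d = Q *ᵥ d := by rw [mulVec_mulVec, hHM]
  have hMd : M *ᵥ d ⬝ᵥ Q *ᵥ d = d ⬝ᵥ D *ᵥ d := by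
    rw [dotProduct_mulVec, ← vecMul_transpose, vecMul_vecMul, hMQ, ← dotProduct_mulVec]
  have hsymm := dotProduct_mulVec_comm_of_transpose_eq hH (M *ᵥ d) x
  simp only [mulVec_sub, mulVec_smul, hHMd, sub_dotProduct, dotProduct_sub, smul_dotProduct,
    dotProduct_smul, smul_eq_mul, hsymm, hMd]
  ring

lemma dotProduct_self_nonneg (v : ι → ℝ) : 0 ≤ v ⬝ᵥ v :=
  Finset.sum_nonneg fun i _ => mul_self_nonneg (v i)

lemma dotProduct_neg_transpose_mulVec {κ : Type*} [Fintype κ] (B : Matrix κ ι ℝ) (x : ι → ℝ)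
    (lam : κ → ℝ) : x ⬝ᵥ -(Bᵀ *ᵥ lam) = -(B *ᵥ x ⬝ᵥ lam) := by
  rw [dotProduct_neg, dotProduct_mulVec, vecMul_transpose]

end QuadraticForm

lemma nonneg_of_forall_add_mul_nonneg {E C : ℝ} (h : ∀ t ∈ Set.Ioc (0 : ℝ) 1, 0 ≤ E + t * C) :
    0 ≤ E := by
  have hlim : Tendsto (fun t : ℝ => E + t * C) (𝓝[>] 0) (𝓝 E) := by
    simpa using ((continuous_id.mul continuous_const).const_add E).continuousWithinAt.tendsto
      (x := 0) (s := Set.Ioi 0)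
  refine ge_of_tendsto hlim ?_
  filter_upwards [Ioc_mem_nhdsGT (zero_lt_one' ℝ)] using h

lemma tendsto_zero_of_le_sub_mul {a b : ℕ → ℝ} {γ : ℝ} (hγ : 0 < γ) (ha : ∀ k, 0 ≤ a k)
    (hb : ∀ k, 0 ≤ b k) (h : ∀ k, a (k + 1) ≤ a k - γ * b k) :
    Tendsto b atTop (𝓝 0) := by
  have hanti : Antitone a := antitone_nat_of_succ_le fun k => by nlinarith [h k, hb k]
  have hlim : Tendsto a atTop (𝓝 (⨅ k, a k)) :=
    tendsto_atTop_ciInf hanti ⟨0, Set.forall_mem_range.2 ha⟩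
  have hdiff : Tendsto (fun k => (a k - a (k + 1)) / γ) atTop (𝓝 0) := by
    simpa using (hlim.sub (hlim.comp (tendsto_add_atTop_nat 1))).div_const γ
  refine squeeze_zero hb (fun k => ?_) hdiff
  rw [le_div_iff₀ hγ]
  linarith [h k]

lemma sq_norm_le_dotProduct_self {ι : Type*} [Fintype ι] (v : ι → ℝ) : ‖v‖ ^ 2 ≤ v ⬝ᵥ v := by
  refine (Real.le_sqrt (norm_nonneg v) (dotProduct_self_nonneg v)).1 ?_
  refine (pi_norm_le_iff_of_nonneg (Real.sqrt_nonneg _)).2 fun i => ?_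
  rw [Real.norm_eq_abs]
  refine Real.abs_le_sqrt ?_
  simpa [sq, dotProduct] using
    Finset.single_le_sum (fun j _ => mul_self_nonneg (v j)) (Finset.mem_univ i)

lemma norm_le_sqrt_of_mul_sq_norm_le {E : Type*} [SeminormedAddCommGroup E] {v : E} {r c : ℝ}
    (hc : 0 < c) (h : c * ‖v‖ ^ 2 ≤ r) : ‖v‖ ≤ Real.sqrt (r / c) :=
  Real.le_sqrt_of_sq_le ((le_div_iff₀ hc).2 (by linarith))

lemma tendsto_zero_of_mul_sq_norm_le {E : Type*} [SeminormedAddCommGroup E] {v : ℕ → E}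
    {r : ℕ → ℝ} {c : ℝ} (hc : 0 < c) (h : ∀ k, c * ‖v k‖ ^ 2 ≤ r k)
    (hr : Tendsto r atTop (𝓝 0)) : Tendsto v atTop (𝓝 0) := by
  refine tendsto_zero_iff_norm_tendsto_zero.2 <| squeeze_zero (fun _ => norm_nonneg _)
    (fun k => norm_le_sqrt_of_mul_sq_norm_le hc (h k)) ?_
  simpa using (hr.div_const c).sqrt

theorem exists_tendsto_of_fejer {E : Type*} [NormedAddCommGroup E] [ProperSpace E]
    {q : E → ℝ} (hq : Continuous q) (hq0 : q 0 = 0) {c : ℝ} (hc : 0 < c)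
    (hcoer : ∀ v, c * ‖v‖ ^ 2 ≤ q v) {S : Set E} (hS : S.Nonempty) {ξ : ℕ → E}
    (hfejer : ∀ z ∈ S, ∀ k, q (ξ (k + 1) - z) ≤ q (ξ k - z))
    (hcluster : ∀ z (φ : ℕ → ℕ), StrictMono φ → Tendsto (ξ ∘ φ) atTop (𝓝 z) → z ∈ S) :
    ∃ z ∈ S, Tendsto ξ atTop (𝓝 z) := by
  have hanti : ∀ z ∈ S, Antitone fun k => q (ξ k - z) :=
    fun z hz => antitone_nat_of_succ_le (hfejer z hz)
  obtain ⟨z₀, hz₀⟩ := hS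
  have hbdd : ∀ k, ξ k ∈ Metric.closedBall z₀ (Real.sqrt (q (ξ 0 - z₀) / c)) := fun k =>
    mem_closedBall_iff_norm.2 <| norm_le_sqrt_of_mul_sq_norm_le hc <|
      (hcoer _).trans (hanti z₀ hz₀ (Nat.zero_le k))
  obtain ⟨z, -, φ, hφ, hφlim⟩ := tendsto_subseq_of_bounded Metric.isBounded_closedBall hbdd
  have hz := hcluster z φ hφ hφlim
  have hqlim : Tendsto (fun k => q (ξ k - z)) atTop (𝓝 0) := by
    refine (tendsto_iff_tendsto_subseq_of_antitone (hanti z hz) hφ.tendsto_atTop).2 ?_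
    simpa [hq0, Function.comp_def] using (hq.tendsto 0).comp (by simpa using hφlim.sub_const z)
  exact ⟨z, hz, tendsto_sub_nhds_zero_iff.1 <|
    tendsto_zero_of_mul_sq_norm_le hc (fun k => hcoer _) hqlim⟩

section FirstOrder

variable {ι κ : Type*} [Fintype ι] [Fintype κ]

-- Compare `x` with `x + t • (y - x)`: convexity bounds `f`, and the quadratic part changes by a
-- linear term plus `O(t²)`.
lemma IsMinOn.variational_ineq_of_convexOn {f : (ι → ℝ) → ℝ} {X : Set (ι → ℝ)}
    (hf : ConvexOn ℝ X f) {β : ℝ} {A : Matrix κ ι ℝ} {lam u : κ → ℝ} {x y : ι → ℝ}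
    (hx : x ∈ X) (hmin : IsMinOn (fun y => f y - lam ⬝ᵥ A *ᵥ y
      + β / 2 * ((A *ᵥ y - u) ⬝ᵥ (A *ᵥ y - u))) X x) (hy : y ∈ X) :
    0 ≤ f y - f x + (A *ᵥ y - A *ᵥ x) ⬝ᵥ (β • (A *ᵥ x - u) - lam) := by
  set d := A *ᵥ y - A *ᵥ x
  set v := A *ᵥ x - u
  refine nonneg_of_forall_add_mul_nonneg (C := β / 2 * (d ⬝ᵥ d)) fun t ⟨ht0, ht1⟩ => ?_
  have hz : (1 - t) • x + t • y ∈ X := hf.1 hx hy (by linarith) ht0.le (by ring)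
  have hfz := hf.2 hx hy (by linarith : 0 ≤ 1 - t) ht0.le (by ring)
  have hAz : A *ᵥ ((1 - t) • x + t • y) = A *ᵥ x + t • d := by
    simp only [d, mulVec_add, mulVec_smul]
    module
  have hlin : lam ⬝ᵥ (A *ᵥ x + t • d) = lam ⬝ᵥ A *ᵥ x + t * (lam ⬝ᵥ d) := by
    rw [dotProduct_add, dotProduct_smul, smul_eq_mul]
  have hshift : A *ᵥ x + t • d - u = v + t • d := add_sub_right_comm _ _ _
  have hquad : (v + t • d) ⬝ᵥ (v + t • d) = v ⬝ᵥ v + 2 * t * (v ⬝ᵥ d) + t ^ 2 * (d ⬝ᵥ d) := by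
    simp only [dotProduct_add, add_dotProduct, dotProduct_smul, smul_dotProduct, smul_eq_mul,
      dotProduct_comm d v]
    ring
  have hgz := isMinOn_iff.1 hmin _ hz
  simp only [hAz, hlin, hshift, hquad] at hgz
  rw [smul_eq_mul, smul_eq_mul] at hfz
  have hE : d ⬝ᵥ (β • v - lam) = β * (v ⬝ᵥ d) - lam ⬝ᵥ d := by
    rw [dotProduct_sub, dotProduct_smul, smul_eq_mul, dotProduct_comm d v, dotProduct_comm d lam]
  rw [hE, ← mul_nonneg_iff_of_pos_left ht0]
  nlinarith

end FirstOrder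

section BlockMatrices

variable {p : ℕ} {β : ℝ}

lemma H0_mul_M0 (hβ : β ≠ 0) : H0 p β * M0 p β = Q0 p β := by
  simp only [H0, M0, Q0, ← fromBlocks_one, sub_eq_add_neg, fromBlocks_smul, fromBlocks_neg,
    fromBlocks_add, fromBlocks_multiply]
  congr 1 <;> ext <;>
    simp [mul_apply, one_apply, add_mul, mul_add, Finset.sum_add_distrib] <;>
    field_simp <;> ring

lemma M0_transpose_mul_Q0 (hβ : β ≠ 0) : (M0 p β)ᵀ * Q0 p β = D0 p β := by
  simp only [D0, M0, Q0, ← fromBlocks_one, sub_eq_add_neg, fromBlocks_smul, fromBlocks_neg,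
    fromBlocks_add, fromBlocks_transpose, fromBlocks_multiply]
  congr 1 <;> ext <;>
    simp [mul_apply, one_apply, add_mul, Finset.sum_add_distrib] <;>
    field_simp <;> ring

lemma Q0_add_transpose : Q0 p β + (Q0 p β)ᵀ = D0 p β + D0 p β := by
  rw [Q0, D0, fromBlocks_transpose, fromBlocks_add, fromBlocks_add]
  congr 1 <;> ext <;> simp

lemma H0_transpose : (H0 p β)ᵀ = H0 p β := by
  rw [H0, fromBlocks_transpose]
  congr 1
  ext
  simp [one_apply, eq_comm, mul_add, mul_ite]

variable {m : ℕ}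

lemma calH_mul_calM (hβ : β ≠ 0) : calH p m β * calM p m β = calQ p m β := by
  rw [calH, calM, calQ, ← mul_kronecker_mul, Matrix.one_mul, H0_mul_M0 hβ]

lemma calM_transpose_mul_calQ (hβ : β ≠ 0) : (calM p m β)ᵀ * calQ p m β = calD p m β := by
  rw [calM, calQ, calD, ← kroneckerMap_transpose, transpose_one, ← mul_kronecker_mul,
    Matrix.one_mul, M0_transpose_mul_Q0 hβ]

lemma calQ_add_transpose : calQ p m β + (calQ p m β)ᵀ = calD p m β + calD p m β := by
  rw [calQ, calD, ← kroneckerMap_transpose, transpose_one, ← add_kronecker, Q0_add_transpose,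
    add_kronecker]

lemma calH_transpose : (calH p m β)ᵀ = calH p m β := by
  rw [calH, ← kroneckerMap_transpose, transpose_one, H0_transpose]

end BlockMatrices

lemma kronecker_one_mulVec_apply {α κ : Type*} [Fintype α] [Fintype κ] [DecidableEq κ]
    (B : Matrix α α ℝ) (v : α × κ → ℝ) (a : α) (j : κ) :
    ((B ⊗ₖ (1 : Matrix κ κ ℝ)) *ᵥ v) (a, j) = ∑ r, B a r * v (r, j) := by
  simp [mulVec, dotProduct, Fintype.sum_prod_type, kroneckerMap_apply, one_apply, mul_ite,
    Finset.sum_ite_eq]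

section Components

variable {p m : ℕ} {β : ℝ}

@[simp] lemma uOf_sub (a b : (Fin p ⊕ Unit) × Fin m → ℝ) (i : Fin p) :
    uOf (a - b) i = uOf a i - uOf b i := rfl

@[simp] lemma lamOf_sub (a b : (Fin p ⊕ Unit) × Fin m → ℝ) :
    lamOf (a - b) = lamOf a - lamOf b := rfl

lemma uOf_calQ_mulVec (v : (Fin p ⊕ Unit) × Fin m → ℝ) (i : Fin p) :
    uOf (calQ p m β *ᵥ v) i = β • uOf v i + lamOf v := by
  ext j
  simp [uOf, lamOf, calQ, kronecker_one_mulVec_apply, Q0, Fintype.sum_sum_type, one_apply]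

lemma lamOf_calQ_mulVec (v : (Fin p ⊕ Unit) × Fin m → ℝ) :
    lamOf (calQ p m β *ᵥ v) = (1 / β) • lamOf v - ∑ i, uOf v i := by
  ext j
  simp [uOf, lamOf, calQ, kronecker_one_mulVec_apply, Q0, Fintype.sum_sum_type, sub_eq_neg_add]

lemma uOf_calD_mulVec (v : (Fin p ⊕ Unit) × Fin m → ℝ) (i : Fin p) :
    uOf (calD p m β *ᵥ v) i = β • uOf v i := by
  ext j
  simp [uOf, calD, kronecker_one_mulVec_apply, D0, Fintype.sum_sum_type, one_apply]

lemma lamOf_calD_mulVec (v : (Fin p ⊕ Unit) × Fin m → ℝ) :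
    lamOf (calD p m β *ᵥ v) = (1 / β) • lamOf v := by
  ext j
  simp [lamOf, calD, kronecker_one_mulVec_apply, D0, Fintype.sum_sum_type]

lemma uOf_calH_mulVec (v : (Fin p ⊕ Unit) × Fin m → ℝ) (i : Fin p) :
    uOf (calH p m β *ᵥ v) i = β • (uOf v i + ∑ i', uOf v i') := by
  ext j
  simp [uOf, calH, kronecker_one_mulVec_apply, H0, Fintype.sum_sum_type, one_apply, add_mul,
    Finset.sum_add_distrib, Finset.mul_sum, mul_add]

lemma lamOf_calH_mulVec (v : (Fin p ⊕ Unit) × Fin m → ℝ) :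
    lamOf (calH p m β *ᵥ v) = ((p + 1 : ℝ) / β) • lamOf v := by
  ext j
  simp [lamOf, calH, kronecker_one_mulVec_apply, H0, Fintype.sum_sum_type]

lemma dotProduct_eq_sum_uOf_add_lamOf (a b : (Fin p ⊕ Unit) × Fin m → ℝ) :
    a ⬝ᵥ b = ∑ i, uOf a i ⬝ᵥ uOf b i + lamOf a ⬝ᵥ lamOf b := by
  simp [dotProduct, uOf, lamOf, Fintype.sum_prod_type, Fintype.sum_sum_type]

end Components

section Norms

variable {p m : ℕ} {β : ℝ}

lemma nsq_calD (v : (Fin p ⊕ Unit) × Fin m → ℝ) :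
    nsq (calD p m β) v = β * ∑ i, uOf v i ⬝ᵥ uOf v i + (1 / β) * (lamOf v ⬝ᵥ lamOf v) := by
  simp only [nsq, dotProduct_eq_sum_uOf_add_lamOf v, uOf_calD_mulVec, lamOf_calD_mulVec,
    dotProduct_smul, smul_eq_mul, Finset.mul_sum]

lemma nsq_calH (v : (Fin p ⊕ Unit) × Fin m → ℝ) :
    nsq (calH p m β) v = nsq (calD p m β) v
      + β * ((∑ i, uOf v i) ⬝ᵥ ∑ i, uOf v i) + (p / β) * (lamOf v ⬝ᵥ lamOf v) := by
  rw [nsq_calD]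
  simp only [nsq, dotProduct_eq_sum_uOf_add_lamOf v, uOf_calH_mulVec,
    lamOf_calH_mulVec, dotProduct_smul, dotProduct_add, smul_eq_mul, Finset.sum_add_distrib,
    ← Finset.mul_sum, ← sum_dotProduct]
  ring

lemma min_mul_sq_norm_le_nsq_calD (hβ : 0 < β) (v : (Fin p ⊕ Unit) × Fin m → ℝ) :
    min β (1 / β) * ‖v‖ ^ 2 ≤ nsq (calD p m β) v := by
  have hu : 0 ≤ ∑ i, uOf v i ⬝ᵥ uOf v i := Finset.sum_nonneg fun i _ => dotProduct_self_nonneg _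
  calc min β (1 / β) * ‖v‖ ^ 2 ≤ min β (1 / β) * (v ⬝ᵥ v) := by
        gcongr
        exact sq_norm_le_dotProduct_self v
    _ ≤ nsq (calD p m β) v := by
        rw [nsq_calD, dotProduct_eq_sum_uOf_add_lamOf v v, mul_add]
        gcongr
        exacts [min_le_left _ _, dotProduct_self_nonneg _, min_le_right _ _]

lemma nsq_calD_nonneg (hβ : 0 < β) (v : (Fin p ⊕ Unit) × Fin m → ℝ) :
    0 ≤ nsq (calD p m β) v :=
  le_trans (by positivity) (min_mul_sq_norm_le_nsq_calD hβ v)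

lemma nsq_calD_le_nsq_calH (hβ : 0 < β) (v : (Fin p ⊕ Unit) × Fin m → ℝ) :
    nsq (calD p m β) v ≤ nsq (calH p m β) v := by
  rw [nsq_calH]
  have := dotProduct_self_nonneg (∑ i, uOf v i)
  have := dotProduct_self_nonneg (lamOf v)
  have : 0 ≤ (p : ℝ) / β := by positivity
  nlinarith

lemma min_mul_sq_norm_le_nsq_calH (hβ : 0 < β) (v : (Fin p ⊕ Unit) × Fin m → ℝ) :
    min β (1 / β) * ‖v‖ ^ 2 ≤ nsq (calH p m β) v :=
  (min_mul_sq_norm_le_nsq_calD hβ v).trans (nsq_calD_le_nsq_calH hβ v)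

end Norms

section ALM

variable {p m : ℕ} {n : Fin p → ℕ} {β : ℝ} {θ : (i : Fin p) → (Fin (n i) → ℝ) → ℝ}
  {X : (i : Fin p) → Set (Fin (n i) → ℝ)} {A : (i : Fin p) → Matrix (Fin m) (Fin (n i)) ℝ}
  {b : Fin m → ℝ}

@[simp] lemma uOf_Pmap (w : ((i : Fin p) → Fin (n i) → ℝ) × (Fin m → ℝ)) (i : Fin p) :
    uOf (Pmap A w) i = A i *ᵥ w.1 i := rfl

@[simp] lemma lamOf_Pmap (w : ((i : Fin p) → Fin (n i) → ℝ) × (Fin m → ℝ)) :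
    lamOf (Pmap A w) = w.2 := rfl

-- `F` is affine with skew-symmetric linear part.
lemma dotW_Fop_skew (w w' : ((i : Fin p) → Fin (n i) → ℝ) × (Fin m → ℝ)) :
    dotW (w - w') (Fop A b w') + dotW (w' - w) (Fop A b w) = 0 := by
  simp only [dotW, Fop, Prod.fst_sub, Prod.snd_sub, Pi.sub_apply, dotProduct_neg_transpose_mulVec,
    sub_dotProduct, dotProduct_sub, Finset.sum_neg_distrib, Finset.sum_sub_distrib,
    dotProduct_comm _ w.2, dotProduct_comm _ w'.2, dotProduct_sum]
  ring

namespace ALMStep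

variable {ξ : (Fin p ⊕ Unit) × Fin m → ℝ} {wt : ((i : Fin p) → Fin (n i) → ℝ) × (Fin m → ℝ)}

lemma lamOf_calQ_mulVec_sub (h : ALMStep β θ X A b ξ wt) (hβ : β ≠ 0) :
    lamOf (calQ p m β *ᵥ (ξ - Pmap A wt)) = (Fop A b wt).2 := by
  have hlam : lamOf ξ - wt.2 = β • ((∑ i, uOf ξ i) - b) := by rw [h.2, sub_sub_cancel]
  rw [lamOf_calQ_mulVec, lamOf_sub, lamOf_Pmap, hlam, smul_smul, one_div,
    inv_mul_cancel₀ hβ, one_smul]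
  simp only [Fop, uOf_sub, uOf_Pmap, Finset.sum_sub_distrib]
  abel

lemma dotProduct_uOf_calQ_mulVec_le (h : ALMStep β θ X A b ξ wt)
    (hθ : ∀ i, ConvexOn ℝ (X i) (θ i)) {w : ((i : Fin p) → Fin (n i) → ℝ) × (Fin m → ℝ)}
    (hw : w ∈ OmegaSet m X) (i : Fin p) :
    uOf (Pmap A w - Pmap A wt) i ⬝ᵥ uOf (calQ p m β *ᵥ (ξ - Pmap A wt)) i
      ≤ θ i (w.1 i) - θ i (wt.1 i) + (w.1 i - wt.1 i) ⬝ᵥ (Fop A b wt).1 i := by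
  have hopt := ((h.1 i).2 |> isMinOn_iff.2).variational_ineq_of_convexOn (hθ i) (h.1 i).1 (hw i)
  rw [uOf_calQ_mulVec]
  simp only [Fop, uOf_sub, uOf_Pmap, lamOf_sub, lamOf_Pmap, dotProduct_neg_transpose_mulVec,
    mulVec_sub, dotProduct_add, dotProduct_sub, dotProduct_smul, smul_eq_mul] at hopt ⊢
  linarith

lemma dotProduct_calQ_mulVec_le (h : ALMStep β θ X A b ξ wt) (hβ : β ≠ 0)
    (hθ : ∀ i, ConvexOn ℝ (X i) (θ i)) {w : ((i : Fin p) → Fin (n i) → ℝ) × (Fin m → ℝ)}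
    (hw : w ∈ OmegaSet m X) :
    (Pmap A w - Pmap A wt) ⬝ᵥ calQ p m β *ᵥ (ξ - Pmap A wt)
      ≤ thetaSum θ w.1 - thetaSum θ wt.1 + dotW (w - wt) (Fop A b wt) := by
  rw [dotProduct_eq_sum_uOf_add_lamOf, h.lamOf_calQ_mulVec_sub hβ, thetaSum, thetaSum, dotW,
    ← add_assoc, ← Finset.sum_sub_distrib, ← Finset.sum_add_distrib]
  exact add_le_add (Finset.sum_le_sum fun i _ => h.dotProduct_uOf_calQ_mulVec_le hθ hw i) le_rfl

lemma nsq_calD_le_dotProduct_calQ_mulVec (h : ALMStep β θ X A b ξ wt) (hβ : β ≠ 0)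
    (hθ : ∀ i, ConvexOn ℝ (X i) (θ i)) {ws : ((i : Fin p) → Fin (n i) → ℝ) × (Fin m → ℝ)}
    (hws : ws ∈ VIsol θ X A b) :
    nsq (calD p m β) (ξ - Pmap A wt) ≤ (ξ - Pmap A ws) ⬝ᵥ calQ p m β *ᵥ (ξ - Pmap A wt) := by
  have hkey := h.dotProduct_calQ_mulVec_le hβ hθ hws.1
  have hvi := hws.2 wt fun i => (h.1 i).1
  have hskew := dotW_Fop_skew (A := A) (b := b) ws wt
  have hsplit : ξ - Pmap A ws = (ξ - Pmap A wt) - (Pmap A ws - Pmap A wt) := by abel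
  rw [nsq, ← dotProduct_mulVec_self_eq_of_add_transpose calQ_add_transpose, hsplit,
    sub_dotProduct (ξ - Pmap A wt)]
  linarith

lemma nsq_calH_relax_le (h : ALMStep β θ X A b ξ wt) (hβ : β ≠ 0)
    (hθ : ∀ i, ConvexOn ℝ (X i) (θ i)) {ws : ((i : Fin p) → Fin (n i) → ℝ) × (Fin m → ℝ)}
    (hws : ws ∈ VIsol θ X A b) {α : ℝ} (hα : 0 ≤ α) :
    nsq (calH p m β) (ξ - α • calM p m β *ᵥ (ξ - Pmap A wt) - Pmap A ws)
      ≤ nsq (calH p m β) (ξ - Pmap A ws) - α * (2 - α) * nsq (calD p m β) (ξ - Pmap A wt) := by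
  have hD := h.nsq_calD_le_dotProduct_calQ_mulVec hβ hθ hws
  rw [sub_right_comm, nsq, dotProduct_mulVec_sub_smul_mulVec calH_transpose (calH_mul_calM hβ)
    (calM_transpose_mul_calQ hβ)]
  unfold nsq at hD ⊢
  nlinarith

end ALMStep

end ALM

lemma exists_tendsto_of_tendsto_mulVec {ι κ : Type*} [Fintype ι] [Fintype κ] {A : Matrix κ ι ℝ}
    (hA : Function.Injective fun x : ι → ℝ => A *ᵥ x) {X : Set (ι → ℝ)} (hX : IsClosed X)
    {x : ℕ → ι → ℝ} (hx : ∀ k, x k ∈ X) {u : κ → ℝ}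
    (h : Tendsto (fun k => A *ᵥ x k) atTop (𝓝 u)) :
    ∃ x₀ ∈ X, A *ᵥ x₀ = u ∧ Tendsto x atTop (𝓝 x₀) := by
  obtain ⟨g, hg⟩ :=
    LinearMap.exists_leftInverse_of_injective A.mulVecLin (LinearMap.ker_eq_bot.2 hA)
  have hgA : ∀ y, g (A *ᵥ y) = y := LinearMap.congr_fun hg
  have hx₀ : Tendsto x atTop (𝓝 (g u)) := by
    simpa [Function.comp_def, hgA] using (g.continuous_of_finiteDimensional.tendsto u).comp h
  refine ⟨g u, hX.mem_of_tendsto hx₀ (Eventually.of_forall hx), ?_, hx₀⟩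
  exact tendsto_nhds_unique ((A.mulVecLin.continuous_of_finiteDimensional.tendsto _).comp hx₀) h

section Limit

variable {p m : ℕ} {n : Fin p → ℕ} {β : ℝ} {θ : (i : Fin p) → (Fin (n i) → ℝ) → ℝ}
  {X : (i : Fin p) → Set (Fin (n i) → ℝ)} {A : (i : Fin p) → Matrix (Fin m) (Fin (n i)) ℝ}
  {b : Fin m → ℝ}

lemma continuous_thetaSum_sub_add_dotW_Fop (hθ : ∀ i, Continuous (θ i))
    (w : ((i : Fin p) → Fin (n i) → ℝ) × (Fin m → ℝ)) :
    Continuous fun v => thetaSum θ w.1 - thetaSum θ v.1 + dotW (w - v) (Fop A b v) := by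
  simp only [thetaSum, dotW, Fop]
  fun_prop

lemma mem_image_VIsol_of_tendsto (hβ : β ≠ 0) (hθX : ∀ i, ConvexOn ℝ (X i) (θ i))
    (hθc : ∀ i, Continuous (θ i)) (hXclosed : ∀ i, IsClosed (X i))
    (hA : ∀ i, Function.Injective fun x : Fin (n i) → ℝ => A i *ᵥ x)
    {ξ : ℕ → (Fin p ⊕ Unit) × Fin m → ℝ} {wt : ℕ → ((i : Fin p) → Fin (n i) → ℝ) × (Fin m → ℝ)}
    (hstep : ∀ k, ALMStep β θ X A b (ξ k) (wt k)) {z : (Fin p ⊕ Unit) × Fin m → ℝ}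
    (hξ : Tendsto ξ atTop (𝓝 z)) (hres : Tendsto (fun k => ξ k - Pmap A (wt k)) atTop (𝓝 0)) :
    z ∈ Pmap A '' VIsol θ X A b := by
  have hP : Tendsto (fun k => Pmap A (wt k)) atTop (𝓝 z) := by simpa using hξ.sub hres
  have hx : ∀ i, ∃ x₀ ∈ X i, A i *ᵥ x₀ = uOf z i ∧ Tendsto (fun k => (wt k).1 i) atTop (𝓝 x₀) :=
    fun i => exists_tendsto_of_tendsto_mulVec (hA i) (hXclosed i) (fun k => ((hstep k).1 i).1)
      (tendsto_pi_nhds.2 fun j => tendsto_pi_nhds.1 hP (Sum.inl i, j))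
  choose x₀ hx₀X hAx₀ hx₀ using hx
  have hPw₀ : Pmap A (x₀, lamOf z) = z := by
    funext q
    rcases q with ⟨i | _, j⟩
    exacts [congrFun (hAx₀ i) j, rfl]
  have hwt : Tendsto wt atTop (𝓝 (x₀, lamOf z)) := (tendsto_pi_nhds.2 hx₀).prodMk_nhds
    (tendsto_pi_nhds.2 fun j => tendsto_pi_nhds.1 hP (Sum.inr (), j))
  refine ⟨(x₀, lamOf z), ⟨hx₀X, fun w hw => ?_⟩, hPw₀⟩
  have hlhs : Tendsto (fun k => (Pmap A w - Pmap A (wt k)) ⬝ᵥ calQ p m β *ᵥ (ξ k - Pmap A (wt k)))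
      atTop (𝓝 0) := by
    have hcont : Continuous fun q : ((Fin p ⊕ Unit) × Fin m → ℝ) × ((Fin p ⊕ Unit) × Fin m → ℝ) =>
        (Pmap A w - q.1) ⬝ᵥ calQ p m β *ᵥ q.2 := by fun_prop
    simpa [Function.comp_def] using (hcont.tendsto (z, 0)).comp (hP.prodMk_nhds hres)
  have hrhs := ((continuous_thetaSum_sub_add_dotW_Fop (A := A) (b := b) hθc w).tendsto _).comp hwt
  exact le_of_tendsto_of_tendsto' hlhs hrhs fun k =>
    (hstep k).dotProduct_calQ_mulVec_le hβ hθX hw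

end Limit

theorem stmt13_general {p m : ℕ} {n : Fin p → ℕ}
    (θ : (i : Fin p) → (Fin (n i) → ℝ) → ℝ) (hθ : ∀ i, ConvexOn ℝ Set.univ (θ i))
    (X : (i : Fin p) → Set (Fin (n i) → ℝ))
    (hXconv : ∀ i, Convex ℝ (X i)) (hXclosed : ∀ i, IsClosed (X i))
    (A : (i : Fin p) → Matrix (Fin m) (Fin (n i)) ℝ) (b : Fin m → ℝ)
    (hA : ∀ i, Function.Injective fun x : Fin (n i) → ℝ => (A i).mulVec x)
    (hsol : (VIsol θ X A b).Nonempty)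
    {β : ℝ} (hβ : 0 < β) {α : ℝ} (hα : α ∈ Set.Ioo (0 : ℝ) 2)
    (ξ : ℕ → ((Fin p ⊕ Unit) × Fin m → ℝ))
    (wt : ℕ → ((i : Fin p) → Fin (n i) → ℝ) × (Fin m → ℝ))
    (hstep : ∀ k, ALMStep β θ X A b (ξ k) (wt k))
    (hrel : ∀ k, ξ (k + 1) = ξ k - α • (calM p m β).mulVec (ξ k - Pmap A (wt k))) :
    ∃ ξinf ∈ Pmap A '' VIsol θ X A b, Filter.Tendsto ξ Filter.atTop (nhds ξinf) := by
  obtain ⟨hα0, hα2⟩ := hα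
  have hγ : 0 < α * (2 - α) := mul_pos hα0 (by linarith)
  have hθX i : ConvexOn ℝ (X i) (θ i) := (hθ i).subset (Set.subset_univ _) (hXconv i)
  have hθc i : Continuous (θ i) := continuousOn_univ.1 ((hθ i).continuousOn isOpen_univ)
  have hc : 0 < min β (1 / β) := lt_min hβ (by positivity)
  have hcontract : ∀ ws ∈ VIsol θ X A b, ∀ k, nsq (calH p m β) (ξ (k + 1) - Pmap A ws)
      ≤ nsq (calH p m β) (ξ k - Pmap A ws)
        - α * (2 - α) * nsq (calD p m β) (ξ k - Pmap A (wt k)) := fun ws hws k => by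
    rw [hrel k]
    exact (hstep k).nsq_calH_relax_le hβ.ne' hθX hws hα0.le
  obtain ⟨ws, hws⟩ := hsol
  have hres : Tendsto (fun k => ξ k - Pmap A (wt k)) atTop (𝓝 0) :=
    tendsto_zero_of_mul_sq_norm_le hc (fun k => min_mul_sq_norm_le_nsq_calD hβ _) <|
      tendsto_zero_of_le_sub_mul (a := fun k => nsq (calH p m β) (ξ k - Pmap A ws)) hγ
        (fun k => (nsq_calD_nonneg hβ _).trans (nsq_calD_le_nsq_calH hβ _))
        (fun k => nsq_calD_nonneg hβ _) (hcontract ws hws)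
  refine exists_tendsto_of_fejer (q := nsq (calH p m β)) (by unfold nsq; fun_prop) (by simp [nsq])
    hc (min_mul_sq_norm_le_nsq_calH hβ) (Set.Nonempty.image _ ⟨ws, hws⟩) ?_
    fun z φ hφ hz => mem_image_VIsol_of_tendsto hβ.ne' hθX hθc hXclosed hA
      (fun k => hstep (φ k)) hz (hres.comp hφ.tendsto_atTop)
  rintro _ ⟨ws', hws', rfl⟩ k
  linarith [hcontract ws' hws' k, mul_nonneg hγ.le (nsq_calD_nonneg hβ (ξ k - Pmap A (wt k)))]

/-- Global convergence: if `Ω*` is nonempty, each `A_i` has full column rank, `α ∈ (0,2)`,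
and `{ξ^k}` is generated by the parallel splitting ALM step followed by the rank-two
relaxation step `ξ^{k+1} = ξ^k − αℳ(ξ^k − ξ̃^k)`, then `{ξ^k}` converges to some
`ξ^∞ ∈ Ξ*`. -/
theorem stmt13 {p m : ℕ} {n : Fin p → ℕ} (hp : 1 ≤ p)
    (θ : (i : Fin p) → (Fin (n i) → ℝ) → ℝ) (hθ : ∀ i, ConvexOn ℝ Set.univ (θ i))
    (X : (i : Fin p) → Set (Fin (n i) → ℝ))
    (hXconv : ∀ i, Convex ℝ (X i)) (hXclosed : ∀ i, IsClosed (X i))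
    (hXne : ∀ i, (X i).Nonempty)
    (A : (i : Fin p) → Matrix (Fin m) (Fin (n i)) ℝ) (b : Fin m → ℝ)
    (hA : ∀ i, Function.Injective fun x : Fin (n i) → ℝ => (A i).mulVec x)
    (hsol : (VIsol θ X A b).Nonempty)
    {β : ℝ} (hβ : 0 < β) {α : ℝ} (hα : α ∈ Set.Ioo (0 : ℝ) 2)
    (ξ : ℕ → ((Fin p ⊕ Unit) × Fin m → ℝ))
    (wt : ℕ → ((i : Fin p) → Fin (n i) → ℝ) × (Fin m → ℝ))
    (hstep : ∀ k, ALMStep β θ X A b (ξ k) (wt k))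
    (hrel : ∀ k, ξ (k + 1) = ξ k - α • (calM p m β).mulVec (ξ k - Pmap A (wt k))) :
    ∃ ξinf ∈ Pmap A '' VIsol θ X A b, Filter.Tendsto ξ Filter.atTop (nhds ξinf) :=
  stmt13_general θ hθ X hXconv hXclosed A b hA hsol hβ hα ξ wt hstep hrel
end
end
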